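/- Let p be a probability distribution on ℕ with p_i > 0 for all i. Then, in the topology on S induced by the ℓ¹-norm, the Bayes blind spot BS(p) is neither an open subset of S nor a closed subset of S. -/

import Mathlib

/-!
All likelihood ratios of `p` itself equal `1`, so `p ∉ BS(p)`; but moving from `p` towards any
`q ∈ BS(p)` along the segment gives the ratios `1 - δ + δ qᵢ / pᵢ`, still injective for `δ ≠ 0`.
Hence `p` lies in the closure of `BS(p)`, which is therefore not closed. Conversely, pooling the
mass `qₙ + qₙ₊₁` of any `q ∈ S` and redistributing it proportionally to `pₙ, pₙ₊₁` makes two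
ratios equal at an `ℓ¹`-cost of at most `2 (qₙ + qₙ₊₁) → 0`. So the complement of `BS(p)` is
dense, and `BS(p)`, which contains the tilted distribution `2⁻ⁱ pᵢ / ∑ⱼ 2⁻ʲ pⱼ`, is not open.
-/

/-- The set of probability distributions on `ℕ`, as a subset of the Banach space `ℓ¹`. -/
def S : Set (lp (fun _ : ℕ => ℝ) 1) :=
  {q | (∀ i, 0 ≤ q i) ∧ HasSum (fun i => q i) 1}

/-- The Bayes blind spot of `p`, as a subset of `S` (with its ℓ¹-subspace topology). -/
def BS (p : ℕ → ℝ) : Set S := {q | Function.Injective fun i => q.1 i / p i}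

open Filter Topology

noncomputable def S.ofFun (f : ℕ → ℝ) (hf₀ : ∀ i, 0 ≤ f i) (hf₁ : HasSum f 1) : S :=
  ⟨⟨f, memℓp_gen <| by simpa [abs_of_nonneg (hf₀ _)] using hf₁.summable⟩, hf₀, hf₁⟩

@[simp]
lemma S.coe_ofFun (f : ℕ → ℝ) (hf₀ : ∀ i, 0 ≤ f i) (hf₁ : HasSum f 1) :
    ⇑(S.ofFun f hf₀ hf₁).1 = f :=
  rfl

lemma convex_S : Convex ℝ S := by
  intro x hx y hy a b ha hb hab
  refine ⟨fun i => ?_, ?_⟩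
  · simp only [lp.coeFn_add, lp.coeFn_smul, Pi.add_apply, Pi.smul_apply, smul_eq_mul]
    exact add_nonneg (mul_nonneg ha (hx.1 i)) (mul_nonneg hb (hy.1 i))
  · simp only [lp.coeFn_add, lp.coeFn_smul, Pi.add_apply, Pi.smul_apply, smul_eq_mul]
    simpa [hab] using (hx.2.mul_left a).add (hy.2.mul_left b)

lemma self_notMem_BS {p : ℕ → ℝ} (hpos : ∀ i, 0 < p i) {P : S} (hP : ⇑P.1 = p) :
    P ∉ BS p := fun hinj =>
  zero_ne_one (hinj (by simp [hP, div_self (hpos _).ne']) : (0 : ℕ) = 1)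

lemma BS_nonempty {p : ℕ → ℝ} (hpos : ∀ i, 0 < p i) (hsum : HasSum p 1) :
    (BS p).Nonempty := by
  obtain ⟨t, ht⟩ : Summable fun i => (2 : ℝ)⁻¹ ^ i * p i :=
    hsum.summable.of_nonneg_of_le (fun i => by have := hpos i; positivity)
      fun i => mul_le_of_le_one_left (hpos i).le (pow_le_one₀ (by norm_num) (by norm_num))
  have ht₀ : 0 < t :=
    (hpos 0).trans_le (by simpa using le_hasSum ht 0 fun i _ => by have := hpos i; positivity)
  refine ⟨S.ofFun (fun i => (2 : ℝ)⁻¹ ^ i * p i / t) (fun i => by have := hpos i; positivity)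
    (by simpa [ht₀.ne'] using ht.div_const t), fun i j hij => ?_⟩
  have : (2 : ℝ)⁻¹ ^ i = (2 : ℝ)⁻¹ ^ j := by
    simpa [mul_div_right_comm _ (p _), (hpos _).ne', ht₀.ne'] using hij
  exact pow_right_injective₀ (by norm_num) (by norm_num) this

lemma lineMap_mem_BS {p : ℕ → ℝ} (hpos : ∀ i, 0 < p i) {P Q : S} (hP : ⇑P.1 = p)
    (hQ : Q ∈ BS p) {δ : ℝ} (hδ : δ ≠ 0) (hmem : AffineMap.lineMap P.1 Q.1 δ ∈ S) :
    (⟨_, hmem⟩ : S) ∈ BS p := by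
  have hratio : ∀ i, AffineMap.lineMap P.1 Q.1 δ i / p i = 1 - δ + δ * (Q.1 i / p i) := by
    intro i
    simp only [AffineMap.lineMap_apply_module, lp.coeFn_add, lp.coeFn_smul, Pi.add_apply,
      Pi.smul_apply, smul_eq_mul, hP]
    field_simp [(hpos i).ne']
  intro i j hij
  apply hQ
  simpa only [hratio, add_right_inj, mul_right_inj' hδ] using hij

lemma mem_closure_BS {p : ℕ → ℝ} (hpos : ∀ i, 0 < p i) {P : S} (hP : ⇑P.1 = p)
    (hne : (BS p).Nonempty) : P ∈ closure (BS p) := by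
  obtain ⟨Q, hQ⟩ := hne
  rw [closure_subtype]
  have hsegment : Tendsto (AffineMap.lineMap P.1 Q.1) (𝓝[>] (0 : ℝ)) (𝓝 P.1) := by
    simpa using (AffineMap.lineMap_continuous.tendsto (0 : ℝ)).mono_left nhdsWithin_le_nhds
  refine mem_closure_of_tendsto hsegment ?_
  filter_upwards [Ioo_mem_nhdsGT one_pos] with δ hδ
  have hmem := convex_S.lineMap_mem P.2 Q.2 ⟨hδ.1.le, hδ.2.le⟩
  exact ⟨⟨_, hmem⟩, lineMap_mem_BS hpos hP hQ hδ.1.ne' hmem, rfl⟩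

noncomputable def pooledRatio (p : ℕ → ℝ) (q : lp (fun _ : ℕ => ℝ) 1) (i j : ℕ) : ℝ :=
  (q i + q j) / (p i + p j)

noncomputable def equalizeRatios (p : ℕ → ℝ) (q : lp (fun _ : ℕ => ℝ) 1) (i j : ℕ) :
    lp (fun _ : ℕ => ℝ) 1 :=
  q + lp.single 1 i (p i * pooledRatio p q i j - q i)
    + lp.single 1 j (p j * pooledRatio p q i j - q j)

section equalizeRatios

variable {p : ℕ → ℝ} {q : lp (fun _ : ℕ => ℝ) 1} {i j : ℕ}

lemma equalizeRatios_apply_left (hij : i ≠ j) :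
    equalizeRatios p q i j i = p i * pooledRatio p q i j := by
  simp [equalizeRatios, hij]

lemma equalizeRatios_apply_right (hij : i ≠ j) :
    equalizeRatios p q i j j = p j * pooledRatio p q i j := by
  simp [equalizeRatios, hij.symm]

lemma equalizeRatios_apply_of_ne {k : ℕ} (hki : k ≠ i) (hkj : k ≠ j) :
    equalizeRatios p q i j k = q k := by
  simp [equalizeRatios, hki, hkj]

lemma mul_pooledRatio_add_mul_pooledRatio (hpos : ∀ i, 0 < p i) :
    p i * pooledRatio p q i j + p j * pooledRatio p q i j = q i + q j := by
  rw [← add_mul, pooledRatio, mul_div_cancel₀ _ (add_pos (hpos i) (hpos j)).ne']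

lemma pooledRatio_nonneg (hpos : ∀ i, 0 < p i) (hq : q ∈ S) : 0 ≤ pooledRatio p q i j :=
  div_nonneg (add_nonneg (hq.1 i) (hq.1 j)) (add_pos (hpos i) (hpos j)).le

lemma equalizeRatios_mem_S (hpos : ∀ i, 0 < p i) (hq : q ∈ S) (hij : i ≠ j) :
    equalizeRatios p q i j ∈ S := by
  refine ⟨fun k => ?_, ?_⟩
  · have := pooledRatio_nonneg (i := i) (j := j) hpos hq
    by_cases hki : k = i
    · rw [hki, equalizeRatios_apply_left hij]; have := hpos i; positivity
    by_cases hkj : k = j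
    · rw [hkj, equalizeRatios_apply_right hij]; have := hpos j; positivity
    · rw [equalizeRatios_apply_of_ne hki hkj]; exact hq.1 k
  · have hmass := mul_pooledRatio_add_mul_pooledRatio (q := q) (i := i) (j := j) hpos
    have := (hq.2.add (hasSum_pi_single i (p i * pooledRatio p q i j - q i))).add
      (hasSum_pi_single j (p j * pooledRatio p q i j - q j))
    rwa [show 1 + (p i * pooledRatio p q i j - q i) + (p j * pooledRatio p q i j - q j) = 1 by
      linarith] at this

lemma equalizeRatios_notMem_BS (hpos : ∀ i, 0 < p i) (hij : i ≠ j)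
    (hmem : equalizeRatios p q i j ∈ S) : (⟨_, hmem⟩ : S) ∉ BS p := fun hinj =>
  hij <| hinj <| by
    simp only [equalizeRatios_apply_left hij, equalizeRatios_apply_right hij,
      mul_div_cancel_left₀ _ (hpos _).ne']

lemma dist_equalizeRatios_le (hpos : ∀ i, 0 < p i) (hq : q ∈ S) :
    dist (equalizeRatios p q i j) q ≤ 2 * (q i + q j) := by
  have hr := pooledRatio_nonneg (i := i) (j := j) hpos hq
  have hmass := mul_pooledRatio_add_mul_pooledRatio (q := q) (i := i) (j := j) hpos
  have hri := mul_nonneg (hpos i).le hr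
  have hrj := mul_nonneg (hpos j).le hr
  have hi : |p i * pooledRatio p q i j - q i| ≤ p i * pooledRatio p q i j + q i :=
    abs_sub_le_iff.2 ⟨by linarith [hq.1 i], by linarith [hq.1 i]⟩
  have hj : |p j * pooledRatio p q i j - q j| ≤ p j * pooledRatio p q i j + q j :=
    abs_sub_le_iff.2 ⟨by linarith [hq.1 j], by linarith [hq.1 j]⟩
  calc dist (equalizeRatios p q i j) q
      = ‖lp.single 1 i (p i * pooledRatio p q i j - q i)
          + lp.single 1 j (p j * pooledRatio p q i j - q j)‖ := by
        rw [dist_eq_norm, equalizeRatios, add_assoc, add_sub_cancel_left]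
    _ ≤ |p i * pooledRatio p q i j - q i| + |p j * pooledRatio p q i j - q j| := by
        refine (norm_add_le _ _).trans_eq ?_
        rw [lp.norm_single one_pos, lp.norm_single one_pos, Real.norm_eq_abs, Real.norm_eq_abs]
    _ ≤ 2 * (q i + q j) := by linarith

end equalizeRatios

lemma tendsto_equalizeRatios {p : ℕ → ℝ} (hpos : ∀ i, 0 < p i) {q : lp (fun _ : ℕ => ℝ) 1}
    (hq : q ∈ S) : Tendsto (fun n => equalizeRatios p q n (n + 1)) atTop (𝓝 q) := by
  have hq₀ : Tendsto (fun n => q n) atTop (𝓝 0) := hq.2.summable.tendsto_atTop_zero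
  have hbound : Tendsto (fun n => 2 * (q n + q (n + 1))) atTop (𝓝 0) := by
    simpa using (hq₀.add (hq₀.comp (tendsto_add_atTop_nat 1))).const_mul 2
  exact tendsto_iff_dist_tendsto_zero.2 <|
    squeeze_zero (fun _ => dist_nonneg) (fun _ => dist_equalizeRatios_le hpos hq) hbound

lemma dense_compl_BS {p : ℕ → ℝ} (hpos : ∀ i, 0 < p i) : Dense (BS p)ᶜ := by
  intro q
  rw [closure_subtype]
  refine mem_closure_of_tendsto (tendsto_equalizeRatios hpos q.2) (.of_forall fun n => ?_)
  have hne : n ≠ n + 1 := n.succ_ne_self.symm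
  have hmem := equalizeRatios_mem_S hpos q.2 hne
  exact ⟨⟨_, hmem⟩, equalizeRatios_notMem_BS hpos hne hmem, rfl⟩

/-- For a probability distribution `p` on `ℕ` with all components
positive, the Bayes blind spot `BS(p)` is neither open nor closed in `S` for the
ℓ¹-subspace topology. -/
theorem bayes_blind_spot_neither_open_nor_closed (p : ℕ → ℝ)
    (hpos : ∀ i, 0 < p i) (hsum : HasSum p 1) :
    ¬ IsOpen (BS p) ∧ ¬ IsClosed (BS p) := by
  have hne := BS_nonempty hpos hsum
  refine ⟨fun hopen => ?_, fun hclosed => ?_⟩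
  · obtain ⟨q, hq, hq'⟩ := (dense_compl_BS hpos).inter_open_nonempty _ hopen hne
    exact hq' hq
  · have hP := S.coe_ofFun p (fun i => (hpos i).le) hsum
    exact self_notMem_BS hpos hP (hclosed.closure_subset (mem_closure_BS hpos hP hne))
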